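/- arXiv:1502.04160 — 2 statements merged into one kernel-verified Lean document; each statement's English description precedes it below -/
import Mathlib

section
/- If n is an even positive integer, ξ is a positive integer, and α is real, then S(n,ξ,α) = −S(n,ξ,α + n/(2ξ)), where −S denotes the set {−λ : λ ∈ S}. -/
/-- The `n×n` real symmetric matrix `M_{n,ξ,α}` with `(j,j)` entry
`(1/2)·cos((2πξ/n)(α+j))`, entries `1/4` for `k ≡ j ± 1 (mod n)`
(including the corners), and `0` elsewhere. -/
noncomputable def Mmat (n : ℕ) (ξ : ℤ) (α : ℝ) : Matrix (Fin n) (Fin n) ℝ :=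
  Matrix.of fun j k =>
    if k = j then (1/2) * Real.cos (2 * Real.pi * (ξ : ℝ) / (n : ℝ) * (α + ((j : ℕ) : ℝ)))
    else if ((k : ℕ) : ZMod n) = ((j : ℕ) : ZMod n) + 1 ∨
        ((k : ℕ) : ZMod n) = ((j : ℕ) : ZMod n) - 1 then 1/4
    else 0

lemma Mmat_conj (n : ℕ) (hn : 0 < n) (heven : Even n) (ξ : ℕ) (hξ : 0 < ξ) (α : ℝ) :
    Mmat n (ξ : ℤ) (α + (n : ℝ) / (2 * (ξ : ℝ))) =
      Matrix.diagonal (fun j : Fin n => (-1 : ℝ) ^ (j : ℕ)) * (-(Mmat n (ξ : ℤ) α)) *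
        Matrix.diagonal (fun j : Fin n => (-1 : ℝ) ^ (j : ℕ)) := by
  ext j k
  rw [Matrix.mul_apply]
  simp only [Matrix.diagonal_mul, Matrix.mul_diagonal, Matrix.neg_apply, Mmat, Matrix.of_apply]
  rw [Finset.sum_eq_single k (by intro b _ hb; simp [Matrix.diagonal_apply_ne _ hb])
    (by intro h; exact absurd (Finset.mem_univ k) h)]
  rw [Matrix.diagonal_apply_eq]
  by_cases hjk : k = j
  · subst hjk
    simp only [if_true]
    have harg : 2 * Real.pi * (((ξ : ℤ) : ℝ)) / (n : ℝ) * (α + (n : ℝ) / (2 * (ξ : ℝ)) + ((k : ℕ) : ℝ))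
        = 2 * Real.pi * (((ξ : ℤ) : ℝ)) / (n : ℝ) * (α + ((k : ℕ) : ℝ)) + Real.pi := by
      have hn' : (n : ℝ) ≠ 0 := Nat.cast_ne_zero.mpr hn.ne'
      have hξ' : (ξ : ℝ) ≠ 0 := Nat.cast_ne_zero.mpr hξ.ne'
      have hξ2 : ((ξ : ℤ) : ℝ) = (ξ : ℝ) := by push_cast; ring
      rw [hξ2]
      field_simp
      ring
    rw [harg, Real.cos_add_pi]
    have h1 : (-1 : ℝ) ^ (k : ℕ) * (-1 : ℝ) ^ (k : ℕ) = 1 := by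
      rw [← pow_add, ← two_mul, pow_mul]; norm_num
    linear_combination (1/2 * Real.cos (2 * Real.pi * (((ξ : ℤ)) : ℝ) / (n : ℝ) * (α + ((k : ℕ) : ℝ)))) * h1
  · by_cases hcond : ((k : ℕ) : ZMod n) = ((j : ℕ) : ZMod n) + 1 ∨
        ((k : ℕ) : ZMod n) = ((j : ℕ) : ZMod n) - 1
    · simp only [if_neg hjk, if_pos hcond]
      -- parity of j + k is odd
      obtain ⟨m, hm⟩ := heven
      have h2 : (2 : ℕ) ∣ n := ⟨m, by omega⟩
      have hodd : Odd ((j : ℕ) + (k : ℕ)) := by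
        have hmap : (((k : ℕ) : ZMod 2)) = ((j : ℕ) : ZMod 2) + 1 := by
          rcases hcond with h | h
          · have := congrArg (ZMod.castHom h2 (ZMod 2)) h
            rwa [map_natCast, map_add, map_natCast, map_one] at this
          · have := congrArg (ZMod.castHom h2 (ZMod 2)) h
            rw [map_natCast, map_sub, map_natCast, map_one] at this
            rw [this, sub_eq_add_neg, show (-1 : ZMod 2) = 1 by decide]
        have hsum : (((j : ℕ) + (k : ℕ) : ℕ) : ZMod 2) = 1 := by
          push_cast
          rw [hmap, ← add_assoc, ← two_mul, show (2 : ZMod 2) = 0 by decide, zero_mul, zero_add]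
        rw [Nat.odd_iff]
        by_contra h
        have : (2 : ℕ) ∣ ((j : ℕ) + (k : ℕ)) := by omega
        rw [(ZMod.natCast_eq_zero_iff _ _).mpr this] at hsum
        exact one_ne_zero hsum.symm
      have : (-1 : ℝ) ^ (j : ℕ) * (-1 : ℝ) ^ (k : ℕ) = -1 := by
        rw [← pow_add]; exact Odd.neg_one_pow hodd
      nlinarith [this]
    · simp only [if_neg hjk, if_neg hcond]
      ring

/-- For `n` even, `ξ` a positive integer and `α` real, `S(n,ξ,α) = -S(n,ξ,α + n/(2ξ))`:
the spectrum of `M_{n,ξ,α}` equals the negation of the spectrum of `M_{n,ξ,α+n/(2ξ)}`. -/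
theorem Mmat_spectrum_neg_even (n : ℕ) (hn : 0 < n) (heven : Even n) (ξ : ℕ) (hξ : 0 < ξ)
    (α : ℝ) :
    spectrum ℝ (Mmat n (ξ : ℤ) α) =
      (fun x : ℝ => -x) '' spectrum ℝ (Mmat n (ξ : ℤ) (α + (n : ℝ) / (2 * (ξ : ℝ)))) := by
  have hDD : Matrix.diagonal (fun j : Fin n => (-1 : ℝ) ^ (j : ℕ)) *
      Matrix.diagonal (fun j : Fin n => (-1 : ℝ) ^ (j : ℕ)) = 1 := by
    rw [Matrix.diagonal_mul_diagonal]
    convert Matrix.diagonal_one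
    rw [← pow_add, ← two_mul, pow_mul]
    norm_num
  set D := Matrix.diagonal (fun j : Fin n => (-1 : ℝ) ^ (j : ℕ)) with hD
  let u : (Matrix (Fin n) (Fin n) ℝ)ˣ := ⟨D, D, hDD, hDD⟩
  have hconj := Mmat_conj n hn heven ξ hξ α
  have hu : (↑u⁻¹ : Matrix (Fin n) (Fin n) ℝ) = D := rfl
  have : spectrum ℝ (Mmat n (ξ : ℤ) (α + (n : ℝ) / (2 * (ξ : ℝ))))
      = spectrum ℝ (-(Mmat n (ξ : ℤ) α)) := by
    rw [hconj]
    have h2 : D * -Mmat n (↑ξ) α * D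
        = (u : Matrix (Fin n) (Fin n) ℝ) * -Mmat n (↑ξ) α * ((u⁻¹ : _) : Matrix (Fin n) (Fin n) ℝ) := by
      rw [hu]
    rw [h2, spectrum.units_conjugate]
  rw [this, ← spectrum.neg_eq]
  ext x
  simp only [Set.mem_neg, Set.mem_image]
  constructor
  · intro hx; exact ⟨-x, by simpa using hx, neg_neg x⟩
  · rintro ⟨y, hy, rfl⟩; simpa using hy
end

section
/- Let n be an even positive integer, ξ a positive integer, and α real. If ψ : {0,…,n−1} → ℝ is an eigenvector of M_{n,ξ,α} with eigenvalue θ, then the function φ defined by φ(j) = (−1)^j·ψ(j) is an eigenvector of M_{n,ξ,α+n/(2ξ)} with eigenvalue −θ. -/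
/-- If `k ≡ j ± 1 (mod n)` with `n` even, then `j` and `k` have opposite parity. -/
lemma parity_neighbor {n : ℕ} (heven : Even n) {j k : ℕ}
    (h : ((k : ℕ) : ZMod n) = ((j : ℕ) : ZMod n) + 1 ∨
        ((k : ℕ) : ZMod n) = ((j : ℕ) : ZMod n) - 1) :
    (-1 : ℝ) ^ k = -(-1 : ℝ) ^ j := by
  obtain ⟨m, hm⟩ := heven
  have hdvd : (2 : ℕ) ∣ n := ⟨m, by omega⟩
  have key : ∀ x : ZMod 2, x - 1 = x + 1 := by decide
  have h2 : ((k : ℕ) : ZMod 2) = ((j + 1 : ℕ) : ZMod 2) := by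
    rcases h with h | h <;>
      have h' := congrArg (ZMod.castHom hdvd (ZMod 2)) h <;>
      simp only [map_natCast, map_add, map_sub, map_one] at h' <;>
      [skip; rw [key] at h'] <;>
      · push_cast
        exact h'
  have hmod : k % 2 = (j + 1) % 2 := (ZMod.natCast_eq_natCast_iff _ _ _).mp h2
  rw [neg_one_pow_eq_pow_mod_two, hmod, ← neg_one_pow_eq_pow_mod_two, pow_succ]
  ring

/-- Entrywise relation between `M_{n,ξ,α+n/(2ξ)}` and `M_{n,ξ,α}`. -/
lemma entry_eq (n : ℕ) (hn : 0 < n) (heven : Even n) (ξ : ℕ) (hξ : 0 < ξ) (α : ℝ)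
    (j k : Fin n) :
    Mmat n (ξ : ℤ) (α + (n : ℝ) / (2 * (ξ : ℝ))) j k
      = -((-1 : ℝ) ^ (j : ℕ) * (-1 : ℝ) ^ (k : ℕ)) * Mmat n (ξ : ℤ) α j k := by
  have hne : (n : ℝ) ≠ 0 := Nat.cast_ne_zero.mpr hn.ne'
  have hxe : (ξ : ℝ) ≠ 0 := Nat.cast_ne_zero.mpr hξ.ne'
  unfold Mmat
  simp only [Matrix.of_apply]
  by_cases hkj : k = j
  · subst hkj
    rw [if_pos rfl, if_pos rfl]
    have harg : 2 * Real.pi * ((ξ : ℤ) : ℝ) / (n : ℝ) *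
        (α + (n : ℝ) / (2 * (ξ : ℝ)) + ((k : ℕ) : ℝ))
        = 2 * Real.pi * ((ξ : ℤ) : ℝ) / (n : ℝ) * (α + ((k : ℕ) : ℝ)) + Real.pi := by
      push_cast
      field_simp
      ring
    rw [harg, Real.cos_add, Real.cos_pi, Real.sin_pi]
    have h1 : ((-1 : ℝ) ^ (k : ℕ)) * ((-1 : ℝ) ^ (k : ℕ)) = 1 := by
      rw [← pow_add]; exact Even.neg_one_pow ⟨(k : ℕ), rfl⟩
    rw [h1]; ring
  · rw [if_neg hkj, if_neg hkj]
    by_cases hnb : ((k : ℕ) : ZMod n) = ((j : ℕ) : ZMod n) + 1 ∨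
        ((k : ℕ) : ZMod n) = ((j : ℕ) : ZMod n) - 1
    · rw [if_pos hnb]
      rw [parity_neighbor heven hnb]
      have h1 : ((-1 : ℝ) ^ (j : ℕ)) * ((-1 : ℝ) ^ (j : ℕ)) = 1 := by
        rw [← pow_add]; exact Even.neg_one_pow ⟨(j : ℕ), rfl⟩
      linear_combination (-1/4 : ℝ) * h1
    · rw [if_neg hnb, mul_zero]

/-- Let `n` be even and `ψ` an eigenvector of `M_{n,ξ,α}` with eigenvalue `θ`. Then
`φ(j) = (-1)^j ψ(j)` is an eigenvector of `M_{n,ξ,α+n/(2ξ)}` with eigenvalue `-θ`. -/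
theorem Mmat_alternating_eigenvector (n : ℕ) (hn : 0 < n) (heven : Even n) (ξ : ℕ)
    (hξ : 0 < ξ) (α θ : ℝ) (ψ : Fin n → ℝ) (hψ : ψ ≠ 0)
    (heig : (Mmat n (ξ : ℤ) α).mulVec ψ = θ • ψ) :
    (fun j : Fin n => (-1 : ℝ) ^ (j : ℕ) * ψ j) ≠ 0 ∧
      (Mmat n (ξ : ℤ) (α + (n : ℝ) / (2 * (ξ : ℝ)))).mulVec
          (fun j : Fin n => (-1 : ℝ) ^ (j : ℕ) * ψ j) =
        (-θ) • (fun j : Fin n => (-1 : ℝ) ^ (j : ℕ) * ψ j) := by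
  constructor
  · intro h0
    apply hψ
    funext j
    have := congrFun h0 j
    simp only [Pi.zero_apply, mul_eq_zero] at this
    rcases this with h | h
    · exact absurd h (pow_ne_zero _ (by norm_num))
    · exact h
  · funext j
    have hrow := congrFun heig j
    simp only [Matrix.mulVec, dotProduct, Pi.smul_apply, smul_eq_mul] at hrow ⊢
    have step : ∀ k : Fin n,
        Mmat n (ξ : ℤ) (α + (n : ℝ) / (2 * (ξ : ℝ))) j k * ((-1 : ℝ) ^ (k : ℕ) * ψ k)
          = (-(-1 : ℝ) ^ (j : ℕ)) * (Mmat n (ξ : ℤ) α j k * ψ k) := by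
      intro k
      rw [entry_eq n hn heven ξ hξ α j k]
      have h1 : ((-1 : ℝ) ^ (k : ℕ)) * ((-1 : ℝ) ^ (k : ℕ)) = 1 := by
        rw [← pow_add]; exact Even.neg_one_pow ⟨(k : ℕ), rfl⟩
      linear_combination (-(-1 : ℝ) ^ (j : ℕ) * Mmat n (ξ : ℤ) α j k * ψ k) * h1
    calc ∑ k, Mmat n (ξ : ℤ) (α + (n : ℝ) / (2 * (ξ : ℝ))) j k * ((-1 : ℝ) ^ (k : ℕ) * ψ k)
        = ∑ k, (-(-1 : ℝ) ^ (j : ℕ)) * (Mmat n (ξ : ℤ) α j k * ψ k) :=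
          Finset.sum_congr rfl fun k _ => step k
      _ = (-(-1 : ℝ) ^ (j : ℕ)) * ∑ k, Mmat n (ξ : ℤ) α j k * ψ k := by
          rw [Finset.mul_sum]
      _ = (-(-1 : ℝ) ^ (j : ℕ)) * (θ * ψ j) := by rw [hrow]
      _ = -θ * ((-1 : ℝ) ^ (j : ℕ) * ψ j) := by ring
end
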